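/- Let Γ : I → ℝ^{2,3} be a generic null curve of sign η ∈ {1,−1} on an open interval I. Then the identities ⟨Γ,Γ′⟩ = ⟨Γ,Γ″⟩ = ⟨Γ,Γ‴⟩ = ⟨Γ′,Γ″⟩ = ⟨Γ″,Γ‴⟩ = 0 and ⟨Γ′,Γ‴⟩ = 2η hold identically on I. Consequently, for every τ ∈ I: the vectors Γ(τ), Γ′(τ), Γ‴(τ) are linearly independent; the Gram determinant ⟨Γ′,Γ′⟩⟨Γ‴,Γ‴⟩ − ⟨Γ′,Γ‴⟩² of the pair (Γ′(τ),Γ‴(τ)) equals −4 (so the restriction of the form to span{Γ′(τ),Γ‴(τ)} is nondegenerate and indefinite); and Γ″(τ) is orthogonal to span{Γ(τ),Γ′(τ),Γ‴(τ)} but does not belong to it. -/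

import Mathlib

/-- The signature `(2,3)` bilinear form on `ℝ⁵`. -/
noncomputable def ip (X Y : Fin 5 → ℝ) : ℝ :=
  -(X 0 * Y 4 + X 4 * Y 0) - X 1 * Y 1 + X 2 * Y 2 + X 3 * Y 3

lemma ip_comm (X Y : Fin 5 → ℝ) : ip X Y = ip Y X := by unfold ip; ring

lemma ip_add_right (X u v : Fin 5 → ℝ) : ip X (u + v) = ip X u + ip X v := by
  unfold ip; simp [Pi.add_apply]; ring

lemma ip_smul_right (X v : Fin 5 → ℝ) (c : ℝ) : ip X (c • v) = c * ip X v := by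
  unfold ip; simp [Pi.smul_apply, smul_eq_mul]; ring

lemma ip_zero_right (X : Fin 5 → ℝ) : ip X 0 = 0 := by unfold ip; simp

lemma ip_hasDerivAt {F G : ℝ → Fin 5 → ℝ} {F' G' : Fin 5 → ℝ} {τ : ℝ}
    (hF : HasDerivAt F F' τ) (hG : HasDerivAt G G' τ) :
    HasDerivAt (fun t => ip (F t) (G t)) (ip F' (G τ) + ip (F τ) G') τ := by
  have hFi : ∀ i, HasDerivAt (fun t => F t i) (F' i) τ := fun i => hasDerivAt_pi.mp hF i
  have hGi : ∀ i, HasDerivAt (fun t => G t i) (G' i) τ := fun i => hasDerivAt_pi.mp hG i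
  have h := ((((((hFi 0).mul (hGi 4)).add ((hFi 4).mul (hGi 0))).neg.sub
      ((hFi 1).mul (hGi 1))).add ((hFi 2).mul (hGi 2))).add ((hFi 3).mul (hGi 3)))
  refine h.congr_deriv ?_
  unfold ip; ring

lemma deriv_const_on {f : ℝ → ℝ} {c τ a b : ℝ} (hτ : τ ∈ Set.Ioo a b)
    (h : ∀ t ∈ Set.Ioo a b, f t = c) : deriv f τ = 0 := by
  have he : f =ᶠ[nhds τ] fun _ => c :=
    Filter.eventuallyEq_of_mem (isOpen_Ioo.mem_nhds hτ) h
  rw [he.deriv_eq, deriv_const]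

/-- for a generic null curve `Γ` of sign `η ∈ {1,−1}` the identities
`⟨Γ,Γ′⟩ = ⟨Γ,Γ″⟩ = ⟨Γ,Γ‴⟩ = ⟨Γ′,Γ″⟩ = ⟨Γ″,Γ‴⟩ = 0` and `⟨Γ′,Γ‴⟩ = 2η` hold; hence
`Γ, Γ′, Γ‴` are linearly independent, the Gram determinant of `(Γ′,Γ‴)` equals `−4`,
and `Γ″` is orthogonal to `span{Γ,Γ′,Γ‴}` but does not belong to it. -/
theorem stmt7 (a b : ℝ) (η : ℝ) (hη : η = 1 ∨ η = -1)
    (Γ : ℝ → Fin 5 → ℝ) (hΓ : ContDiff ℝ (⊤ : ℕ∞) Γ)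
    (h1 : ∀ τ ∈ Set.Ioo a b, ip (Γ τ) (Γ τ) = 1)
    (h2 : ∀ τ ∈ Set.Ioo a b, ip (deriv Γ τ) (deriv Γ τ) = 0)
    (h3 : ∀ τ ∈ Set.Ioo a b, ip (deriv (deriv Γ) τ) (deriv (deriv Γ) τ) = -2 * η) :
    ∀ τ ∈ Set.Ioo a b,
      ip (Γ τ) (deriv Γ τ) = 0 ∧
      ip (Γ τ) (deriv (deriv Γ) τ) = 0 ∧
      ip (Γ τ) (deriv (deriv (deriv Γ)) τ) = 0 ∧
      ip (deriv Γ τ) (deriv (deriv Γ) τ) = 0 ∧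
      ip (deriv (deriv Γ) τ) (deriv (deriv (deriv Γ)) τ) = 0 ∧
      ip (deriv Γ τ) (deriv (deriv (deriv Γ)) τ) = 2 * η ∧
      LinearIndependent ℝ ![Γ τ, deriv Γ τ, deriv (deriv (deriv Γ)) τ] ∧
      ip (deriv Γ τ) (deriv Γ τ) *
          ip (deriv (deriv (deriv Γ)) τ) (deriv (deriv (deriv Γ)) τ) -
        (ip (deriv Γ τ) (deriv (deriv (deriv Γ)) τ)) ^ 2 = -4 ∧
      (∀ v ∈ Submodule.span ℝ
          ({Γ τ, deriv Γ τ, deriv (deriv (deriv Γ)) τ} : Set (Fin 5 → ℝ)),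
        ip (deriv (deriv Γ) τ) v = 0) ∧
      deriv (deriv Γ) τ ∉ Submodule.span ℝ
        ({Γ τ, deriv Γ τ, deriv (deriv (deriv Γ)) τ} : Set (Fin 5 → ℝ)) := by
  have hη0 : η ≠ 0 := by rcases hη with h | h <;> rw [h] <;> norm_num
  set Γ1 := deriv Γ with hΓ1def
  set Γ2 := deriv Γ1 with hΓ2def
  set Γ3 := deriv Γ2 with hΓ3def
  have hΓ' : ContDiff ℝ ((⊤ : ℕ∞) : WithTop ℕ∞) Γ := hΓ.of_le (by simp)
  have hΓ1 : ContDiff ℝ ((⊤ : ℕ∞) : WithTop ℕ∞) Γ1 := (contDiff_infty_iff_deriv.mp hΓ').2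
  have hΓ2 : ContDiff ℝ ((⊤ : ℕ∞) : WithTop ℕ∞) Γ2 := (contDiff_infty_iff_deriv.mp hΓ1).2
  have hd0 : ∀ t, HasDerivAt Γ (Γ1 t) t := fun t =>
    ((contDiff_infty_iff_deriv.mp hΓ').1 t).hasDerivAt
  have hd1 : ∀ t, HasDerivAt Γ1 (Γ2 t) t := fun t =>
    ((contDiff_infty_iff_deriv.mp hΓ1).1 t).hasDerivAt
  have hd2 : ∀ t, HasDerivAt Γ2 (Γ3 t) t := fun t =>
    ((contDiff_infty_iff_deriv.mp hΓ2).1 t).hasDerivAt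
  -- ⟨Γ,Γ'⟩ = 0
  have e1 : ∀ τ ∈ Set.Ioo a b, ip (Γ τ) (Γ1 τ) = 0 := by
    intro τ hτ
    have hD := (ip_hasDerivAt (hd0 τ) (hd0 τ)).deriv
    rw [deriv_const_on hτ h1] at hD
    rw [ip_comm] at hD
    linarith
  -- ⟨Γ,Γ''⟩ = 0
  have e2 : ∀ τ ∈ Set.Ioo a b, ip (Γ τ) (Γ2 τ) = 0 := by
    intro τ hτ
    have hD := (ip_hasDerivAt (hd0 τ) (hd1 τ)).deriv
    rw [deriv_const_on hτ e1] at hD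
    have := h2 τ hτ
    rw [ip_comm] at hD
    linarith
  -- ⟨Γ',Γ''⟩ = 0
  have e4 : ∀ τ ∈ Set.Ioo a b, ip (Γ1 τ) (Γ2 τ) = 0 := by
    intro τ hτ
    have hD := (ip_hasDerivAt (hd1 τ) (hd1 τ)).deriv
    rw [deriv_const_on hτ h2] at hD
    rw [ip_comm] at hD
    linarith
  -- ⟨Γ,Γ'''⟩ = 0
  have e3 : ∀ τ ∈ Set.Ioo a b, ip (Γ τ) (Γ3 τ) = 0 := by
    intro τ hτ
    have hD := (ip_hasDerivAt (hd0 τ) (hd2 τ)).deriv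
    rw [deriv_const_on hτ e2] at hD
    have := e4 τ hτ
    rw [ip_comm (Γ1 τ)] at hD
    rw [ip_comm] at this
    linarith
  -- ⟨Γ'',Γ'''⟩ = 0
  have e5 : ∀ τ ∈ Set.Ioo a b, ip (Γ2 τ) (Γ3 τ) = 0 := by
    intro τ hτ
    have hD := (ip_hasDerivAt (hd2 τ) (hd2 τ)).deriv
    rw [deriv_const_on hτ h3] at hD
    rw [ip_comm] at hD
    linarith
  -- ⟨Γ',Γ'''⟩ = 2η
  have e6 : ∀ τ ∈ Set.Ioo a b, ip (Γ1 τ) (Γ3 τ) = 2 * η := by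
    intro τ hτ
    have hD := (ip_hasDerivAt (hd1 τ) (hd2 τ)).deriv
    rw [deriv_const_on hτ e4] at hD
    have := h3 τ hτ
    rw [ip_comm (Γ2 τ) (Γ2 τ)] at hD
    linarith
  intro τ hτ
  have E1 := e1 τ hτ; have E2 := e2 τ hτ; have E3 := e3 τ hτ
  have E4 := e4 τ hτ; have E5 := e5 τ hτ; have E6 := e6 τ hτ
  have H1 := h1 τ hτ; have H2 := h2 τ hτ; have H3 := h3 τ hτ
  -- Γ' τ ≠ 0
  have hΓ1ne : Γ1 τ ≠ 0 := by
    intro h0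
    rw [ip_comm] at E6
    rw [h0, ip_zero_right] at E6
    exact hη0 (by linarith)
  -- orthogonality of Γ'' to the span
  have horth : ∀ v ∈ Submodule.span ℝ
      ({Γ τ, Γ1 τ, Γ3 τ} : Set (Fin 5 → ℝ)), ip (Γ2 τ) v = 0 := by
    intro v hv
    induction hv using Submodule.span_induction with
    | mem x hx =>
      rcases hx with h | h | h
      · rw [h, ip_comm]; exact E2
      · rw [h, ip_comm]; exact E4
      · rw [h]; exact E5
    | zero => exact ip_zero_right _
    | add x y _ _ hx hy => rw [ip_add_right, hx, hy]; ring
    | smul c x _ hx => rw [ip_smul_right, hx]; ring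
  refine ⟨E1, E2, E3, E4, E5, E6, ?_, ?_, horth, ?_⟩
  · -- linear independence
    rw [Fintype.linearIndependent_iff]
    intro g hg
    simp only [Fin.sum_univ_three, Matrix.cons_val_zero, Matrix.cons_val_one,
      Matrix.head_cons, Matrix.cons_val_two, Matrix.tail_cons] at hg
    have key : ∀ X : Fin 5 → ℝ,
        g 0 * ip X (Γ τ) + g 1 * ip X (Γ1 τ) + g 2 * ip X (Γ3 τ) = 0 := by
      intro X
      have := congrArg (ip X) hg
      rw [ip_add_right, ip_add_right, ip_smul_right, ip_smul_right, ip_smul_right,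
        ip_zero_right] at this
      linarith
    have k0 := key (Γ τ)
    rw [H1, E1, E3] at k0
    have hg0 : g 0 = 0 := by linarith
    have k1 := key (Γ1 τ)
    rw [ip_comm (Γ1 τ) (Γ τ), E1, H2, E6] at k1
    have hg2 : g 2 = 0 := by
      have : g 2 * (2 * η) = 0 := by linarith
      rcases mul_eq_zero.mp this with h | h
      · exact h
      · exact absurd (by linarith : η = 0) hη0
    have hg1 : g 1 = 0 := by
      rw [hg0, hg2] at hg
      simp only [zero_smul, zero_add, add_zero] at hg
      rcases smul_eq_zero.mp hg with h | h
      · exact h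
      · exact absurd h hΓ1ne
    intro i
    fin_cases i <;> assumption
  · -- Gram determinant
    rw [H2, E6]
    have : η ^ 2 = 1 := by rcases hη with h | h <;> rw [h] <;> norm_num
    nlinarith
  · -- Γ'' not in the span
    intro hmem
    have := horth _ hmem
    rw [H3] at this
    exact hη0 (by linarith)
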